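/- arXiv:2301.06232 — 3 statements merged into one kernel-verified Lean document; each statement's English description precedes it below -/
import Mathlib

section
/- (Boundary sum bound) Let n ≥ 1, m_max ≥ 1, and natural numbers p < q and L > m_max. Let ∂[qL]ⁿ := [qL]ⁿ \ [qL − m_max]ⁿ denote the boundary shell of the torus [qL]ⁿ. Then for every l⃗′ ∈ [pL]ⁿ, Σ_{l⃗ ∈ ∂[qL]ⁿ} exp(−d^{qL}(l⃗,l⃗′)/m_max) ≤ (2 m_max)ⁿ e^{√n/m_max} Sₙ Γ(n), where Sₙ = 2 π^{n/2} / Γ(n/2) is the surface area of the n-dimensional unit ball and Γ is the Gamma function. -/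
set_option maxHeartbeats 1000000
set_option synthInstance.maxHeartbeats 400000

open scoped BigOperators
open Complex

noncomputable section

namespace MultiPeriodic

/-- The representative of `a : ZMod N` (with `N = 2L`) in `[L] = {-L+1, …, L}`. -/
def sval {N : ℕ} [NeZero N] (a : ZMod N) : ℤ :=
  if 2 * a.val ≤ N then (a.val : ℤ) else (a.val : ℤ) - N

/-- The torus distance `d^L` on `[L]ⁿ` (realized as `(ZMod (2L))ⁿ`). -/
def torusDist {n N : ℕ} [NeZero N] (l l' : Fin n → ZMod N) : ℝ :=
  Real.sqrt (∑ i, ((min ((l i - l' i).val) (N - (l i - l' i).val) : ℕ) : ℝ) ^ 2)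

variable {H : Type} [NormedAddCommGroup H] [InnerProductSpace ℂ H]

/-- The Floquet–Hilbert space `ℂ^{[L]ⁿ} ⊗ H`, realized as the `ℓ²`-space of
`H`-valued functions on the torus `[L]ⁿ = (ZMod (2L))ⁿ`. -/
abbrev FSpace (n N : ℕ) (H : Type) [NormedAddCommGroup H] [InnerProductSpace ℂ H] : Type :=
  PiLp 2 (fun _ : Fin n → ZMod N => H)

instance {n N : ℕ} [CompleteSpace H] : CompleteSpace (FSpace n N H) :=
  inferInstanceAs (CompleteSpace (PiLp 2 (fun _ : Fin n → ZMod N => H)))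

variable {n N : ℕ} [NeZero N]

/-- Inclusion `H →L ℂ^{[L]ⁿ} ⊗ H` of the component labelled by `l`. -/
def inclL (l : Fin n → ZMod N) : H →L[ℂ] FSpace n N H :=
  ((PiLp.continuousLinearEquiv 2 ℂ (fun _ : Fin n → ZMod N => H)).symm.toContinuousLinearMap).comp
    (ContinuousLinearMap.pi (fun l' => if l' = l then ContinuousLinearMap.id ℂ H else 0))

/-- Projection `ℂ^{[L]ⁿ} ⊗ H →L H` onto the component labelled by `l`. -/
def projL (l : Fin n → ZMod N) : FSpace n N H →L[ℂ] H :=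
  (ContinuousLinearMap.proj l).comp
    (PiLp.continuousLinearEquiv 2 ℂ (fun _ : Fin n → ZMod N => H)).toContinuousLinearMap

/-- The operator-valued block `⟨l| A |l'⟩` of an operator `A` on `ℂ^{[L]ⁿ} ⊗ H`. -/
def block (A : FSpace n N H →L[ℂ] FSpace n N H) (l l' : Fin n → ZMod N) : H →L[ℂ] H :=
  (projL l).comp (A.comp (inclL l'))

/-- The canonical map of an integer vector `m⃗ ∈ ℤⁿ` into the torus `(ZMod N)ⁿ`. -/
def mcast (m : Fin n → ℤ) : Fin n → ZMod N := fun i => ((m i : ZMod N))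

/-- `Add_{m⃗}^L = Σ_{l⃗∈[L]ⁿ} |l⃗⊕m⃗⟩⟨l⃗|` (tensored with the identity on `H`). -/
def addOp (m : Fin n → ℤ) : FSpace n N H →L[ℂ] FSpace n N H :=
  ∑ l : Fin n → ZMod N, (inclL (l + mcast m)).comp (projL l)

/-- `l⃗ · ω⃗`, where `l⃗ ∈ [L]ⁿ` is identified with its representative in `{-L+1,…,L}ⁿ`. -/
def ldotω (ω : Fin n → ℝ) (l : Fin n → ZMod N) : ℝ :=
  ∑ i, (sval (l i) : ℝ) * ω i

/-- `m⃗ · ω⃗` for an integer vector `m⃗`. -/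
def mdotω (ω : Fin n → ℝ) (m : Fin n → ℤ) : ℝ :=
  ∑ i, (m i : ℝ) * ω i

/-- The linear-potential Hamiltonian `𝖧_LP^L = Σ_{l⃗∈[L]ⁿ} (l⃗·ω⃗) |l⃗⟩⟨l⃗| ⊗ I`. -/
def HLP (ω : Fin n → ℝ) : FSpace n N H →L[ℂ] FSpace n N H :=
  ∑ l : Fin n → ZMod N, ((ldotω ω l : ℝ) : ℂ) • ((inclL l).comp (projL l))

/-- The hopping part `Σ_{m⃗∈M} Add_{m⃗}^L ⊗ H_{m⃗}` of the effective Hamiltonian. -/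
def HAdd (M : Finset (Fin n → ℤ)) (Hm : (Fin n → ℤ) → H →L[ℂ] H) :
    FSpace n N H →L[ℂ] FSpace n N H :=
  ∑ m ∈ M, ∑ l : Fin n → ZMod N, (inclL (l + mcast m)).comp ((Hm m).comp (projL l))

/-- The effective Hamiltonian `𝖧^L = Σ_{m⃗∈M} Add_{m⃗}^L ⊗ H_{m⃗} − 𝖧_LP^L`. -/
def Heff (M : Finset (Fin n → ℤ)) (Hm : (Fin n → ℤ) → H →L[ℂ] H) (ω : Fin n → ℝ) :
    FSpace n N H →L[ℂ] FSpace n N H :=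
  HAdd M Hm - HLP ω

/-- The multi-periodic Hamiltonian `H(t) = Σ_{m⃗∈M} H_{m⃗} e^{−i m⃗·ω⃗ t}`. -/
def Ht (M : Finset (Fin n → ℤ)) (Hm : (Fin n → ℤ) → H →L[ℂ] H) (ω : Fin n → ℝ) (t : ℝ) :
    H →L[ℂ] H :=
  ∑ m ∈ M, Complex.exp (-Complex.I * ((mdotω ω m : ℝ) : ℂ) * (t : ℝ)) • Hm m

variable [FiniteDimensional ℂ H]

/-- The time evolution `e^{−i 𝖧^L t}` generated by the effective Hamiltonian. -/
def expEff (M : Finset (Fin n → ℤ)) (Hm : (Fin n → ℤ) → H →L[ℂ] H) (ω : Fin n → ℝ) (t : ℝ) :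
    FSpace n N H →L[ℂ] FSpace n N H :=
  NormedSpace.exp ((-Complex.I * (t : ℂ)) • Heff M Hm ω)

/-- `U_{l⃗′}^{L}(t) = Σ_{l⃗∈[L]ⁿ} e^{−i l⃗·ω⃗ t} ⟨l⃗| e^{−i 𝖧^{L} t} |l⃗′⟩`. -/
def Ulp (M : Finset (Fin n → ℤ)) (Hm : (Fin n → ℤ) → H →L[ℂ] H) (ω : Fin n → ℝ)
    (l' : Fin n → ZMod N) (t : ℝ) : H →L[ℂ] H :=
  ∑ l : Fin n → ZMod N,
    Complex.exp (-Complex.I * ((ldotω ω l : ℝ) : ℂ) * (t : ℂ)) •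
      block (expEff M Hm ω t) l l'

/-- `γ`, the supremum over `x⃗ ∈ [0,2π)ⁿ` of `‖Σ_{m⃗∈M, m⃗≠0} H_{m⃗} e^{−i m⃗·x⃗}‖`. -/
def gammaSup (n : ℕ) (M : Finset (Fin n → ℤ)) (Hm : (Fin n → ℤ) → H →L[ℂ] H) : ℝ :=
  sSup {r : ℝ | ∃ x : Fin n → ℝ, (∀ i, x i ∈ Set.Ico (0 : ℝ) (2 * Real.pi)) ∧
    r = ‖∑ m ∈ M.erase 0, Complex.exp (-Complex.I * ((∑ i, (m i : ℝ) * x i : ℝ) : ℂ)) • Hm m‖}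

/-- The constant `C_{n,m_max} = 4 (2√π m_max)ⁿ (Γ(n)/Γ(n/2)) e^{√n/m_max}`. -/
def Cnm (n : ℕ) (mmax : ℝ) : ℝ :=
  4 * (2 * Real.sqrt Real.pi * mmax) ^ n * (Real.Gamma n / Real.Gamma (n / 2)) *
    Real.exp (Real.sqrt n / mmax)

/-- The Euclidean norm of an integer vector. -/
def enorm' (m : Fin n → ℤ) : ℝ := Real.sqrt (∑ i, ((m i : ℝ)) ^ 2)

end MultiPeriodic

/-!
Enlarge the sum to the whole torus. By Cauchy–Schwarz, `∑ᵢ |cᵢ| ≤ √n · d` for the coordinate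
distances `cᵢ`, so each term is at most `∏ᵢ exp (-|cᵢ| / (√n m_max))` and the sum factorizes into
the `n`-th power of a one-dimensional sum, which two geometric series bound by `1 + 2 √n m_max`.
It remains to use `(x + 1)ⁿ ≤ xⁿ e^{n/x}` and `√nⁿ ≤ Sₙ Γ(n)`; the latter goes by induction
`n → n + 2`, where the left side grows by a factor at most `(n + 2) e` and the right side by
`2π (n + 1)`.
-/

open Finset

theorem add_pow_le_pow_mul_exp {x y : ℝ} (hx : 0 < x) (hy : 0 ≤ y) (n : ℕ) :
    (x + y) ^ n ≤ x ^ n * Real.exp (n * y / x) := by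
  have hxy : x + y ≤ x * Real.exp (y / x) := by
    have := Real.add_one_le_exp (y / x)
    calc x + y = x * (y / x + 1) := by field_simp; ring
      _ ≤ x * Real.exp (y / x) := by gcongr
  calc (x + y) ^ n ≤ (x * Real.exp (y / x)) ^ n := by gcongr
    _ = x ^ n * Real.exp (n * y / x) := by rw [mul_pow, ← Real.exp_nat_mul, mul_div_assoc]

theorem sum_le_sqrt_card_mul_sqrt_sum_sq {ι : Type*} (s : Finset ι) (f : ι → ℝ) :
    ∑ i ∈ s, f i ≤ √(#s : ℝ) * √(∑ i ∈ s, f i ^ 2) := by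
  rw [← Real.sqrt_mul (Nat.cast_nonneg _)]
  exact (le_abs_self _).trans (Real.abs_le_sqrt (sq_sum_le_card_mul_sum_sq))

theorem ZMod.sum_comp_val {M : Type*} [AddCommMonoid M] (N : ℕ) [NeZero N] (f : ℕ → M) :
    ∑ c : ZMod N, f c.val = ∑ i ∈ range N, f i :=
  Finset.sum_nbij' (fun c => c.val) (fun i => (i : ZMod N))
    (fun c _ => mem_range.mpr (ZMod.val_lt c)) (fun _ _ => mem_univ _)
    (fun c _ => ZMod.natCast_zmod_val c) (fun _ hi => ZMod.val_cast_of_lt (mem_range.mp hi))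
    (fun _ _ => rfl)

theorem sum_pow_min_val_le {r : ℝ} (hr0 : 0 ≤ r) (hr1 : r < 1) (N : ℕ) [NeZero N] :
    ∑ c : ZMod N, r ^ min c.val (N - c.val) ≤ (1 + r) / (1 - r) := by
  have hmin : ∀ u v : ℕ, r ^ min u v ≤ r ^ u + r ^ v := fun u v => by
    rcases le_total u v with h | h
    · rw [min_eq_left h]; exact le_add_of_nonneg_right (by positivity)
    · rw [min_eq_right h]; exact le_add_of_nonneg_left (by positivity)
  have hreflect : ∑ i ∈ range N, r ^ (N - i) = r * ∑ i ∈ range N, r ^ i := by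
    rw [mul_sum, ← sum_range_reflect]
    refine sum_congr rfl fun i hi => ?_
    rw [← pow_succ']
    congr 1
    have := mem_range.mp hi
    omega
  have hgeom : ∑ i ∈ range N, r ^ i ≤ 1 / (1 - r) := by
    simpa using geom_sum_Ico_le_of_lt_one (m := 0) (n := N) hr0 hr1
  calc ∑ c : ZMod N, r ^ min c.val (N - c.val)
      ≤ ∑ c : ZMod N, (r ^ c.val + r ^ (N - c.val)) := sum_le_sum fun c _ => hmin _ _
    _ = (1 + r) * ∑ i ∈ range N, r ^ i := by
      rw [ZMod.sum_comp_val N (fun i => r ^ i + r ^ (N - i)), sum_add_distrib, hreflect]; ring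
    _ ≤ (1 + r) * (1 / (1 - r)) := by gcongr
    _ = (1 + r) / (1 - r) := by ring

theorem one_add_exp_neg_inv_div_one_sub_le {a : ℝ} (ha : 0 < a) :
    (1 + Real.exp (-1 / a)) / (1 - Real.exp (-1 / a)) ≤ 1 + 2 * a := by
  set r := Real.exp (-1 / a)
  have hr1 : r < 1 := Real.exp_lt_one_iff.mpr (div_neg_of_neg_of_pos (by norm_num) ha)
  have hkey : r * (1 + a) ≤ a := by
    have hinv : r * Real.exp (1 / a) = 1 := by
      rw [← Real.exp_add, neg_div, neg_add_cancel, Real.exp_zero]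
    have := mul_le_mul_of_nonneg_left (Real.add_one_le_exp (1 / a)) (by positivity : 0 ≤ r * a)
    calc r * (1 + a) = r * a * (1 / a + 1) := by field_simp
      _ ≤ r * a * Real.exp (1 / a) := this
      _ = a := by rw [mul_right_comm, hinv, one_mul]
  rw [div_le_iff₀ (sub_pos.mpr hr1)]
  nlinarith

theorem sum_exp_neg_min_val_div_le (N : ℕ) [NeZero N] {a : ℝ} (ha : 0 < a) :
    ∑ c : ZMod N, Real.exp (-((min c.val (N - c.val) : ℕ) : ℝ) / a) ≤ 1 + 2 * a := by
  have hpow : ∀ k : ℕ, Real.exp (-(k : ℝ) / a) = Real.exp (-1 / a) ^ k := fun k => by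
    rw [← Real.exp_nat_mul]; ring_nf
  simp_rw [hpow]
  exact (sum_pow_min_val_le (Real.exp_nonneg _)
    (Real.exp_lt_one_iff.mpr (div_neg_of_neg_of_pos (by norm_num) ha)) N).trans
    (one_add_exp_neg_inv_div_one_sub_le ha)

namespace MultiPeriodic

variable {n N : ℕ} [NeZero N]

theorem exp_neg_torusDist_div_le_prod {M : ℝ} (hM : 0 < M) (hn : 0 < n)
    (l l' : Fin n → ZMod N) :
    Real.exp (-torusDist l l' / M) ≤
      ∏ i, Real.exp (-((min (l i - l' i).val (N - (l i - l' i).val) : ℕ) : ℝ) / (√n * M)) := by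
  set m : Fin n → ℝ := fun i => ((min (l i - l' i).val (N - (l i - l' i).val) : ℕ) : ℝ)
  have hCS : ∑ i, m i ≤ √n * torusDist l l' := by
    simpa [torusDist, m] using sum_le_sqrt_card_mul_sqrt_sum_sq univ m
  rw [← Real.exp_sum, Real.exp_le_exp]
  calc -torusDist l l' / M = -(√n * torusDist l l') / (√n * M) := by field_simp
    _ ≤ -(∑ i, m i) / (√n * M) := by gcongr
    _ = ∑ i, -m i / (√n * M) := by rw [← sum_div, sum_neg_distrib]

theorem sum_exp_neg_torusDist_div_le {M : ℝ} (hM : 0 < M) (hn : 0 < n) (l' : Fin n → ZMod N) :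
    ∑ l, Real.exp (-torusDist l l' / M) ≤ (1 + 2 * (√n * M)) ^ n := by
  calc ∑ l, Real.exp (-torusDist l l' / M)
      ≤ ∑ l : Fin n → ZMod N, ∏ i,
          Real.exp (-((min (l i - l' i).val (N - (l i - l' i).val) : ℕ) : ℝ) / (√n * M)) :=
        sum_le_sum fun l _ => exp_neg_torusDist_div_le_prod hM hn l l'
    _ = ∏ i : Fin n, ∑ c : ZMod N,
          Real.exp (-((min (c - l' i).val (N - (c - l' i).val) : ℕ) : ℝ) / (√n * M)) :=
        (Fintype.prod_sum fun i c =>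
          Real.exp (-((min (c - l' i).val (N - (c - l' i).val) : ℕ) : ℝ) / (√n * M))).symm
    _ = ∏ _i : Fin n, ∑ c : ZMod N,
          Real.exp (-((min c.val (N - c.val) : ℕ) : ℝ) / (√n * M)) :=
        prod_congr rfl fun i _ => (Equiv.subRight (l' i)).sum_comp
          (fun c => Real.exp (-((min c.val (N - c.val) : ℕ) : ℝ) / (√n * M)))
    _ ≤ (1 + 2 * (√n * M)) ^ n := by
      rw [prod_const, card_univ, Fintype.card_fin]
      gcongr
      exact sum_exp_neg_min_val_div_le N (by positivity)

end MultiPeriodic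

theorem one_add_two_mul_sqrt_mul_pow_le {n : ℕ} (hn : 0 < n) {M : ℝ} (hM : 0 < M) :
    (1 + 2 * (√n * M)) ^ n ≤ (2 * M) ^ n * Real.exp (√n / M) * √n ^ n := by
  have hs : 0 < √(n : ℝ) := Real.sqrt_pos.mpr (by exact_mod_cast hn)
  have hexp : (n : ℝ) * 1 / (2 * (√n * M)) = √n / (2 * M) := by
    field_simp
    exact (Real.sq_sqrt (Nat.cast_nonneg n)).symm
  calc (1 + 2 * (√n * M)) ^ n = (2 * (√n * M) + 1) ^ n := by rw [add_comm]
    _ ≤ (2 * (√n * M)) ^ n * Real.exp (n * 1 / (2 * (√n * M))) :=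
      add_pow_le_pow_mul_exp (by positivity) zero_le_one n
    _ = (2 * M) ^ n * Real.exp (√n / (2 * M)) * √n ^ n := by rw [hexp]; ring
    _ ≤ (2 * M) ^ n * Real.exp (√n / M) * √n ^ n := by
      gcongr
      linarith [div_pos hs hM]

def unitSphereArea (n : ℕ) : ℝ := 2 * Real.pi ^ ((n : ℝ) / 2) / Real.Gamma ((n : ℝ) / 2)

theorem unitSphereArea_one : unitSphereArea 1 = 2 := by
  have hπ : 0 < √Real.pi := Real.sqrt_pos.mpr Real.pi_pos
  rw [unitSphereArea, Nat.cast_one, Real.Gamma_one_half_eq, ← Real.sqrt_eq_rpow]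
  field_simp

theorem unitSphereArea_two : unitSphereArea 2 = 2 * Real.pi := by
  simp [unitSphereArea]

theorem unitSphereArea_add_two {n : ℕ} (hn : 0 < n) :
    unitSphereArea (n + 2) = 2 * Real.pi / n * unitSphereArea n := by
  have hn' : (0 : ℝ) < n := by exact_mod_cast hn
  have hΓ : 0 < Real.Gamma ((n : ℝ) / 2) := Real.Gamma_pos_of_pos (by positivity)
  rw [unitSphereArea, unitSphereArea, Nat.cast_add, Nat.cast_two, add_div, div_self two_ne_zero,
    Real.rpow_add_one Real.pi_pos.ne', Real.Gamma_add_one (by positivity)]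
  field_simp

theorem sqrt_add_two_pow_le {n : ℕ} (hn : 0 < n) :
    √(n + 2 : ℝ) ^ n ≤ √n ^ n * Real.exp 1 := by
  have hs : 0 < √(n : ℝ) := Real.sqrt_pos.mpr (by exact_mod_cast hn)
  have hss : √(n : ℝ) * √n = n := Real.mul_self_sqrt (Nat.cast_nonneg n)
  -- `(√n + 1/√n)² = n + 2 + 1/n`
  have hle : √(n + 2 : ℝ) ≤ √n + 1 / √n := by
    rw [Real.sqrt_le_left (by positivity)]
    field_simp
    nlinarith
  calc √(n + 2 : ℝ) ^ n ≤ (√n + 1 / √n) ^ n := by gcongr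
    _ ≤ √n ^ n * Real.exp (n * (1 / √n) / √n) := add_pow_le_pow_mul_exp hs (by positivity) n
    _ = √n ^ n * Real.exp 1 := by
      congr 2
      field_simp
      linarith

theorem sqrt_pow_le_unitSphereArea_mul_Gamma_add_two {n : ℕ} (hn : 0 < n)
    (ih : √n ^ n ≤ unitSphereArea n * Real.Gamma n) :
    √(↑(n + 2) : ℝ) ^ (n + 2) ≤ unitSphereArea (n + 2) * Real.Gamma ↑(n + 2) := by
  have hn' : (0 : ℝ) < n := by exact_mod_cast hn
  have hΓ : Real.Gamma (n + 2 : ℝ) = (n + 1) * n * Real.Gamma n := by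
    rw [show (n + 2 : ℝ) = n + 1 + 1 by ring, Real.Gamma_add_one (by positivity),
      Real.Gamma_add_one hn'.ne', mul_assoc]
  have hstep : (n + 2 : ℝ) * Real.exp 1 ≤ 2 * Real.pi * (n + 1) := by
    nlinarith [Real.pi_gt_three, Real.exp_one_lt_d9]
  push_cast
  calc √(n + 2 : ℝ) ^ (n + 2) = (n + 2) * √(n + 2 : ℝ) ^ n := by
        rw [pow_add, Real.sq_sqrt (by positivity)]; ring
    _ ≤ (n + 2) * (√n ^ n * Real.exp 1) := by gcongr; exact sqrt_add_two_pow_le hn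
    _ = (n + 2) * Real.exp 1 * √n ^ n := by ring
    _ ≤ 2 * Real.pi * (n + 1) * (unitSphereArea n * Real.Gamma n) := by gcongr
    _ = unitSphereArea (n + 2) * Real.Gamma (n + 2) := by
        rw [unitSphereArea_add_two hn, hΓ]
        field_simp

theorem sqrt_pow_le_unitSphereArea_mul_Gamma {n : ℕ} (hn : 0 < n) :
    √n ^ n ≤ unitSphereArea n * Real.Gamma n := by
  induction n using Nat.strong_induction_on with
  | _ n ih =>
    match n, hn with
    | 1, _ => simp [unitSphereArea_one]
    | 2, _ => norm_num [unitSphereArea_two]; nlinarith [Real.pi_gt_three]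
    | m + 3, _ =>
      exact sqrt_pow_le_unitSphereArea_mul_Gamma_add_two m.succ_pos
        (ih _ (by omega) m.succ_pos)

theorem boundary_sum_bound_general
    (n : ℕ) (hn : 1 ≤ n) (mmax : ℕ) (hmmax : 1 ≤ mmax)
    (q L : ℕ) [NeZero q] [NeZero L]
    (l' : Fin n → ℤ) :
    ∑ l ∈ Finset.univ.filter (fun l : Fin n → ZMod (2 * q * L) =>
        ¬ ∀ i, MultiPeriodic.sval (l i) ∈
          Finset.Icc (-(q * L : ℤ) + 1 + (mmax : ℤ)) ((q * L : ℤ) - (mmax : ℤ))),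
      Real.exp (-(MultiPeriodic.torusDist l (fun i => ((l' i : ZMod (2 * q * L))))) / mmax) ≤
    (2 * (mmax : ℝ)) ^ n * Real.exp (Real.sqrt n / mmax) *
      (2 * Real.pi ^ ((n : ℝ) / 2) / Real.Gamma ((n : ℝ) / 2)) * Real.Gamma n := by
  have hM : (0 : ℝ) < mmax := by exact_mod_cast hmmax
  calc _ ≤ ∑ l, Real.exp
          (-MultiPeriodic.torusDist l (fun i => (l' i : ZMod (2 * q * L))) / mmax) :=
        sum_le_sum_of_subset_of_nonneg (filter_subset _ _) fun _ _ _ => Real.exp_nonneg _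
    _ ≤ (1 + 2 * (√n * mmax)) ^ n := MultiPeriodic.sum_exp_neg_torusDist_div_le hM hn _
    _ ≤ (2 * mmax) ^ n * Real.exp (√n / mmax) * √n ^ n := one_add_two_mul_sqrt_mul_pow_le hn hM
    _ ≤ (2 * mmax) ^ n * Real.exp (√n / mmax) * (unitSphereArea n * Real.Gamma n) := by
        gcongr; exact sqrt_pow_le_unitSphereArea_mul_Gamma hn
    _ = _ := by rw [unitSphereArea, ← mul_assoc]

/-- **Boundary sum bound.**
For `n ≥ 1`, `m_max ≥ 1`, `p < q`, `L > m_max` and every `l⃗′ ∈ [pL]ⁿ`,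
`Σ_{l⃗ ∈ ∂[qL]ⁿ} exp(−d^{qL}(l⃗,l⃗′)/m_max) ≤ (2 m_max)ⁿ e^{√n/m_max} Sₙ Γ(n)`,
where `∂[qL]ⁿ = [qL]ⁿ \ [qL − m_max]ⁿ` and `Sₙ = 2 π^{n/2} / Γ(n/2)`. -/
theorem boundary_sum_bound
    (n : ℕ) (hn : 1 ≤ n) (mmax : ℕ) (hmmax : 1 ≤ mmax)
    (p q L : ℕ) [NeZero q] [NeZero L] (hpq : p < q) (hL : mmax < L)
    (l' : Fin n → ℤ) (hl' : ∀ i, l' i ∈ Finset.Icc (-(p * L : ℤ) + 1) (p * L : ℤ)) :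
    ∑ l ∈ Finset.univ.filter (fun l : Fin n → ZMod (2 * q * L) =>
        ¬ ∀ i, MultiPeriodic.sval (l i) ∈
          Finset.Icc (-(q * L : ℤ) + 1 + (mmax : ℤ)) ((q * L : ℤ) - (mmax : ℤ))),
      Real.exp (-(MultiPeriodic.torusDist l (fun i => ((l' i : ZMod (2 * q * L))))) / mmax) ≤
    (2 * (mmax : ℝ)) ^ n * Real.exp (Real.sqrt n / mmax) *
      (2 * Real.pi ^ ((n : ℝ) / 2) / Real.Gamma ((n : ℝ) / 2)) * Real.Gamma n :=
  boundary_sum_bound_general n hn mmax hmmax q L l'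
end
end

section
/- (Locality of interaction-picture products) Under the stated setup, let 𝖧₀ be any operator on ℂ^{[L]ⁿ} ⊗ H that is block-diagonal in the basis {|l⃗⟩} (i.e., 𝖧₀ = Σ_{l⃗} |l⃗⟩⟨l⃗| ⊗ K_{l⃗} for some operators K_{l⃗} on H), let 𝖧_I = Σ_{m⃗∈M, m⃗≠0⃗} Add_{m⃗}^L ⊗ H_{m⃗}, and define 𝖧_I(s) = e^{i𝖧₀ s} 𝖧_I e^{−i𝖧₀ s}. Then for any j ≥ 1, any times t₁,…,t_j ∈ ℝ, and any l⃗, l⃗′ ∈ [L]ⁿ with j · m_max < d^L(l⃗, l⃗′), the block ⟨l⃗| 𝖧_I(t_j) ⋯ 𝖧_I(t₁) |l⃗′⟩ equals 0, where m_max bounds the Euclidean norm |m⃗| ≤ m_max for all m⃗ ∈ M. -/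
set_option maxHeartbeats 1000000
set_option synthInstance.maxHeartbeats 400000

open scoped BigOperators
open Complex

noncomputable section

namespace MultiPeriodic

variable {H : Type} [NormedAddCommGroup H] [InnerProductSpace ℂ H] [FiniteDimensional ℂ H]
variable {n N : ℕ} [NeZero N]

/-- The interaction picture `𝖧_I(s) = e^{i𝖧₀s} 𝖧_I e^{−i𝖧₀s}`. -/
def intPicture (H₀ HI : FSpace n N H →L[ℂ] FSpace n N H) (s : ℝ) :
    FSpace n N H →L[ℂ] FSpace n N H :=
  (NormedSpace.exp ((Complex.I * (s : ℂ)) • H₀)).comp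
    (HI.comp (NormedSpace.exp ((-Complex.I * (s : ℂ)) • H₀)))

end MultiPeriodic

/-!
Say that an operator `A` on `ℂ^{[L]ⁿ} ⊗ H` has hopping range `r` if `⟨l⃗| A |l⃗′⟩ = 0`
whenever `d^L(l⃗, l⃗′) > r`. Expanding `⟨l⃗| AB |l⃗′⟩ = Σ_k ⟨l⃗| A |k⟩⟨k| B |l⃗′⟩`, the triangle
inequality for `d^L` shows that ranges add under composition. The hopping term `𝖧_I` has range
`m_max`, and `e^{±i𝖧₀s}` has range `0` because the block-diagonal `𝖧₀` commutes with every
projection `|l⃗⟩⟨l⃗| ⊗ I`. So each `𝖧_I(t_k)` has range `m_max`, and a product of `j` of them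
has range `j · m_max`.
-/

theorem Real.sqrt_sum_sq_le_of_le_add {ι : Type*} [Fintype ι] {f g h : ι → ℝ}
    (hf : ∀ i, 0 ≤ f i) (hle : ∀ i, f i ≤ g i + h i) :
    √(∑ i, f i ^ 2) ≤ √(∑ i, g i ^ 2) + √(∑ i, h i ^ 2) := by
  have hnorm : ∀ u : ι → ℝ, √(∑ i, u i ^ 2) = ‖(WithLp.toLp 2 u : EuclideanSpace ℝ ι)‖ := by
    intro u
    simp [EuclideanSpace.norm_eq]
  calc √(∑ i, f i ^ 2) ≤ √(∑ i, (g i + h i) ^ 2) :=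
        Real.sqrt_le_sqrt <| Finset.sum_le_sum fun i _ => pow_le_pow_left₀ (hf i) (hle i) 2
    _ = ‖(WithLp.toLp 2 g : EuclideanSpace ℝ ι) + WithLp.toLp 2 h‖ := hnorm (g + h)
    _ ≤ _ := by rw [hnorm g, hnorm h]; exact norm_add_le _ _

namespace MultiPeriodic

section TorusDist

variable {n N : ℕ} [NeZero N]

lemma torusDist_eq_sqrt_sum_natAbs_valMinAbs (a b : Fin n → ZMod N) :
    torusDist a b = √(∑ i, ((a i - b i).valMinAbs.natAbs : ℝ) ^ 2) := by
  simp only [torusDist, ZMod.valMinAbs_natAbs_eq_min]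

lemma torusDist_self (a : Fin n → ZMod N) : torusDist a a = 0 := by
  simp [torusDist_eq_sqrt_sum_natAbs_valMinAbs]

lemma ne_of_zero_lt_torusDist {a b : Fin n → ZMod N} (h : 0 < torusDist a b) : a ≠ b := by
  rintro rfl
  exact (torusDist_self a ▸ h).false

lemma torusDist_triangle (a b c : Fin n → ZMod N) :
    torusDist a c ≤ torusDist a b + torusDist b c := by
  simp only [torusDist_eq_sqrt_sum_natAbs_valMinAbs]
  refine Real.sqrt_sum_sq_le_of_le_add (fun _ => Nat.cast_nonneg _) fun i => ?_
  have h := (ZMod.natAbs_valMinAbs_add_le (a i - b i) (b i - c i)).trans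
    (Int.natAbs_add_le (a i - b i).valMinAbs (b i - c i).valMinAbs)
  rw [sub_add_sub_cancel] at h
  exact_mod_cast h

lemma torusDist_add_mcast_le (b : Fin n → ZMod N) (m : Fin n → ℤ) :
    torusDist (b + mcast m) b ≤ enorm' m := by
  rw [torusDist_eq_sqrt_sum_natAbs_valMinAbs, enorm']
  refine Real.sqrt_le_sqrt <| Finset.sum_le_sum fun i _ => ?_
  have hcoord : (b + mcast m : Fin n → ZMod N) i - b i = (m i : ZMod N) :=
    add_sub_cancel_left (b i) _
  have hle : ((m i : ZMod N)).valMinAbs.natAbs ≤ (m i).natAbs :=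
    ZMod.natAbs_min_of_le_div_two N _ _ (ZMod.coe_valMinAbs _) (ZMod.natAbs_valMinAbs_le _)
  rw [hcoord, ← sq_abs (m i : ℝ), ← Int.cast_abs, Int.abs_eq_natAbs, Int.cast_natCast]
  exact pow_le_pow_left₀ (Nat.cast_nonneg _) (Nat.cast_le.mpr hle) 2

end TorusDist

variable {H : Type} [NormedAddCommGroup H] [InnerProductSpace ℂ H] {n N : ℕ}

lemma projL_inclL_apply (k l : Fin n → ZMod N) (x : H) :
    projL k (inclL l x) = if k = l then x else 0 := by
  change (if k = l then ContinuousLinearMap.id ℂ H else 0) x = _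
  split_ifs <;> rfl

lemma block_apply (A : FSpace n N H →L[ℂ] FSpace n N H) (l l' : Fin n → ZMod N) (x : H) :
    block A l l' x = projL l (A (inclL l' x)) := rfl

lemma block_eq_zero_of_commute {A : FSpace n N H →L[ℂ] FSpace n N H} {l l' : Fin n → ZMod N}
    (hA : Commute A ((inclL l').comp (projL l'))) (h : l ≠ l') : block A l l' = 0 := by
  ext x
  have hx : inclL l' x = (inclL l').comp (projL l') (inclL l' x) := by
    simp [projL_inclL_apply]
  rw [block_apply, hx, ← ContinuousLinearMap.comp_apply A, ← ContinuousLinearMap.mul_def, hA.eq,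
    ContinuousLinearMap.mul_def, ContinuousLinearMap.comp_apply, ContinuousLinearMap.comp_apply,
    projL_inclL_apply, if_neg h]
  rfl

variable [NeZero N]

lemma sum_inclL_projL_apply (x : FSpace n N H) : ∑ l, inclL l (projL l x) = x := by
  ext k
  simp only [WithLp.ofLp_sum, Finset.sum_apply]
  rw [Finset.sum_eq_single k (fun l _ hl => by simp [inclL, Ne.symm hl]) (by simp)]
  simp [inclL, projL]

lemma block_comp (A B : FSpace n N H →L[ℂ] FSpace n N H) (l l' : Fin n → ZMod N) :
    block (A.comp B) l l' = ∑ k, (block A l k).comp (block B k l') := by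
  ext x
  simp only [sum_apply, ContinuousLinearMap.comp_apply, block_apply]
  rw [← map_sum (projL l), ← map_sum A, sum_inclL_projL_apply]

def blockDiag (K : (Fin n → ZMod N) → H →L[ℂ] H) : FSpace n N H →L[ℂ] FSpace n N H :=
  ∑ l, (inclL l).comp ((K l).comp (projL l))

lemma commute_blockDiag_inclL_comp_projL (K : (Fin n → ZMod N) → H →L[ℂ] H)
    (l : Fin n → ZMod N) :
    Commute (blockDiag K) ((inclL l).comp (projL l)) := by
  ext x
  have hsum : ∀ y : H, blockDiag K (inclL l y) = inclL l (K l y) := fun y => by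
    rw [blockDiag, sum_apply, Finset.sum_eq_single l (fun k _ hk => by simp [projL_inclL_apply, hk])
      (by simp)]
    simp [projL_inclL_apply]
  have hproj : projL l (blockDiag K x) = K l (projL l x) := by
    rw [blockDiag, sum_apply, map_sum, Finset.sum_eq_single l
      (fun k _ hk => by simp [projL_inclL_apply, Ne.symm hk]) (by simp)]
    simp [projL_inclL_apply]
  simp only [ContinuousLinearMap.mul_def, ContinuousLinearMap.comp_apply, hsum, hproj]

def HasHoppingRange (A : FSpace n N H →L[ℂ] FSpace n N H) (r : ℝ) : Prop :=
  ∀ a b : Fin n → ZMod N, r < torusDist a b → block A a b = 0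

lemma hasHoppingRange_of_commute {A : FSpace n N H →L[ℂ] FSpace n N H}
    (hA : ∀ l, Commute A ((inclL l).comp (projL l))) : HasHoppingRange A 0 :=
  fun _ b hab => block_eq_zero_of_commute (hA b) (ne_of_zero_lt_torusDist hab)

lemma HasHoppingRange.comp {A B : FSpace n N H →L[ℂ] FSpace n N H} {r s : ℝ}
    (hA : HasHoppingRange A r) (hB : HasHoppingRange B s) : HasHoppingRange (A.comp B) (r + s) := by
  intro a b hab
  rw [block_comp]
  refine Finset.sum_eq_zero fun k _ => ?_
  rcases lt_or_ge r (torusDist a k) with hak | hak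
  · rw [hA a k hak, ContinuousLinearMap.zero_comp]
  · have hkb : s < torusDist k b := by linarith [torusDist_triangle a k b]
    rw [hB k b hkb, ContinuousLinearMap.comp_zero]

lemma hasHoppingRange_list_prod {ops : List (FSpace n N H →L[ℂ] FSpace n N H)} {r : ℝ}
    (h : ∀ A ∈ ops, HasHoppingRange A r) : HasHoppingRange ops.prod (ops.length * r) := by
  induction ops with
  | nil => simpa using hasHoppingRange_of_commute fun _ => Commute.one_left _
  | cons A ops ih =>
    have hprod := (h A List.mem_cons_self).comp (ih fun B hB => h B (List.mem_cons_of_mem A hB))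
    rw [List.length_cons, Nat.cast_succ, add_one_mul, add_comm]
    exact hprod

lemma hasHoppingRange_HAdd {M : Finset (Fin n → ℤ)} (Hm : (Fin n → ℤ) → H →L[ℂ] H) {r : ℝ}
    (hM : ∀ m ∈ M, enorm' m ≤ r) : HasHoppingRange (HAdd (N := N) M Hm) r := by
  intro a b hab
  ext x
  simp only [block_apply, HAdd, sum_apply, ContinuousLinearMap.comp_apply, map_sum]
  refine Finset.sum_eq_zero fun m hm =>
    (Finset.sum_eq_single b (fun k _ hk => ?_) (by simp)).trans ?_
  · simp [projL_inclL_apply, hk]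
  · have hne : a ≠ b + mcast m := by
      rintro rfl
      linarith [torusDist_add_mcast_le b m, hM m hm]
    simp [projL_inclL_apply, hne]

lemma HasHoppingRange.intPicture [FiniteDimensional ℂ H] (K : (Fin n → ZMod N) → H →L[ℂ] H)
    {HI : FSpace n N H →L[ℂ] FSpace n N H} {r : ℝ} (hI : HasHoppingRange HI r) (s : ℝ) :
    HasHoppingRange (intPicture (blockDiag K) HI s) r := by
  have hexp : ∀ c : ℂ, HasHoppingRange (NormedSpace.exp (c • blockDiag K)) 0 := fun c =>
    hasHoppingRange_of_commute fun l =>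
      ((commute_blockDiag_inclL_comp_projL K l).smul_left c).exp_left
  simpa only [MultiPeriodic.intPicture, zero_add, add_zero] using (hexp _).comp (hI.comp (hexp _))

end MultiPeriodic

open MultiPeriodic in
theorem interaction_picture_locality_general
    {H : Type} [NormedAddCommGroup H] [InnerProductSpace ℂ H] [FiniteDimensional ℂ H]
    (n : ℕ)
    (M : Finset (Fin n → ℤ)) (Hm : (Fin n → ℤ) → H →L[ℂ] H)
    (mmax : ℝ) (hM : ∀ m ∈ M, MultiPeriodic.enorm' m ≤ mmax)
    (L : ℕ) [NeZero L]
    (K : (Fin n → ZMod (2 * L)) → H →L[ℂ] H)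
    (H₀ : MultiPeriodic.FSpace n (2 * L) H →L[ℂ] MultiPeriodic.FSpace n (2 * L) H)
    (hH₀ : H₀ = ∑ l : Fin n → ZMod (2 * L),
      (MultiPeriodic.inclL l).comp ((K l).comp (MultiPeriodic.projL l)))
    (j : ℕ) (ts : Fin j → ℝ)
    (l l' : Fin n → ZMod (2 * L))
    (hd : (j : ℝ) * mmax < MultiPeriodic.torusDist l l') :
    MultiPeriodic.block
      ((List.ofFn (fun k : Fin j =>
        MultiPeriodic.intPicture H₀ (MultiPeriodic.HAdd (N := 2 * L) (M.erase 0) Hm)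
          (ts k))).prod)
      l l' = 0 := by
  have hI : HasHoppingRange (HAdd (N := 2 * L) (M.erase 0) Hm) mmax :=
    hasHoppingRange_HAdd Hm fun m hm => hM m (Finset.mem_of_mem_erase hm)
  have hfactors : ∀ A ∈ List.ofFn (fun k : Fin j => intPicture H₀ (HAdd (M.erase 0) Hm) (ts k)),
      HasHoppingRange A mmax := by
    simp only [List.mem_ofFn, forall_exists_index]
    rintro _ k rfl
    exact hH₀ ▸ hI.intPicture K (ts k)
  exact hasHoppingRange_list_prod hfactors l l' (by simpa using hd)

/-- **Locality of interaction-picture products.**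
Let `𝖧₀ = Σ_{l⃗} |l⃗⟩⟨l⃗| ⊗ K_{l⃗}` be block diagonal, `𝖧_I = Σ_{m⃗≠0} Add_{m⃗}^L ⊗ H_{m⃗}`
with `|m⃗| ≤ m_max` for all `m⃗ ∈ M`, and `𝖧_I(s) = e^{i𝖧₀s} 𝖧_I e^{−i𝖧₀s}`. Then for any
`j ≥ 1`, times `t₁,…,t_j` and `l⃗, l⃗′` with `j·m_max < d^L(l⃗,l⃗′)`, the block
`⟨l⃗| 𝖧_I(t_j) ⋯ 𝖧_I(t₁) |l⃗′⟩` vanishes. -/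
theorem interaction_picture_locality
    {H : Type} [NormedAddCommGroup H] [InnerProductSpace ℂ H] [FiniteDimensional ℂ H]
    (n : ℕ) (hn : 1 ≤ n)
    (M : Finset (Fin n → ℤ)) (Hm : (Fin n → ℤ) → H →L[ℂ] H)
    (mmax : ℝ) (hM : ∀ m ∈ M, MultiPeriodic.enorm' m ≤ mmax)
    (L : ℕ) [NeZero L]
    (K : (Fin n → ZMod (2 * L)) → H →L[ℂ] H)
    (H₀ : MultiPeriodic.FSpace n (2 * L) H →L[ℂ] MultiPeriodic.FSpace n (2 * L) H)
    (hH₀ : H₀ = ∑ l : Fin n → ZMod (2 * L),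
      (MultiPeriodic.inclL l).comp ((K l).comp (MultiPeriodic.projL l)))
    (j : ℕ) (hj : 1 ≤ j) (ts : Fin j → ℝ)
    (l l' : Fin n → ZMod (2 * L))
    (hd : (j : ℝ) * mmax < MultiPeriodic.torusDist l l') :
    MultiPeriodic.block
      ((List.ofFn (fun k : Fin j =>
        MultiPeriodic.intPicture H₀ (MultiPeriodic.HAdd (N := 2 * L) (M.erase 0) Hm)
          (ts k))).prod)
      l l' = 0 :=
  interaction_picture_locality_general n M Hm mmax hM L K H₀ hH₀ j ts l l' hd
end
end

section
/- (Lambert-W-type sufficient condition) For every κ > 0 and every η ∈ (0,1], and for every real x with x ≥ e·κ + 4 log(1/η) / log(e + κ^{−1} log(1/η)), one has (κ/x)ˣ ≤ η. -/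
/-- **Lambert-W-type sufficient condition.**
For `κ > 0`, `η ∈ (0,1]` and every real
`x ≥ e·κ + 4 log(1/η) / log(e + κ⁻¹ log(1/η))`, one has `(κ/x)ˣ ≤ η`. -/
theorem lambert_w_type_condition (κ η : ℝ) (hκ : 0 < κ) (hη : η ∈ Set.Ioc (0 : ℝ) 1)
    (x : ℝ)
    (hx : Real.exp 1 * κ +
        4 * Real.log (1 / η) / Real.log (Real.exp 1 + κ⁻¹ * Real.log (1 / η)) ≤ x) :
    (κ / x) ^ x ≤ η := by
  obtain ⟨hη0, hη1⟩ := hη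
  set E := Real.exp 1 with hE
  have hE1 : 1 < E := by
    rw [hE]; linarith [Real.exp_one_gt_d9]
  set L := Real.log (1 / η) with hLdef
  have hL0 : 0 ≤ L := Real.log_nonneg (one_le_one_div hη0 hη1)
  set t := κ⁻¹ * L with htdef
  have ht0 : 0 ≤ t := mul_nonneg (inv_nonneg.2 hκ.le) hL0
  set D := Real.log (E + t) with hDdef
  have hEt0 : 0 < E + t := by linarith
  have hD1 : 1 ≤ D := by
    rw [hDdef]
    exact (Real.le_log_iff_exp_le hEt0).2 (by rw [← hE]; linarith)
  have hD0 : 0 < D := lt_of_lt_of_le one_pos hD1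
  have hq0 : 0 ≤ 4 * L / D := by positivity
  have hxEκ : E * κ ≤ x := by linarith
  have hx0 : 0 < x := lt_of_lt_of_le (by positivity) hxEκ
  have hxκE : E ≤ x / κ := (le_div_iff₀ hκ).2 (by linarith)
  have hlog1 : 1 ≤ Real.log (x / κ) :=
    (Real.le_log_iff_exp_le (by positivity)).2 (by rw [← hE]; exact hxκE)
  have key : L ≤ x * Real.log (x / κ) := by
    by_cases hD4 : D ≤ 4
    · have h1 : L ≤ 4 * L / D := by
        rw [le_div_iff₀ hD0]; nlinarith
      nlinarith
    · push_neg at hD4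
      set v := Real.exp (D / 4) with hv
      have hEv : E ≤ v := by
        rw [hv, hE]; exact Real.exp_le_exp.2 (by linarith)
      have hv1 : 1 < v := lt_of_lt_of_le hE1 hEv
      have hlogv : Real.log v = D / 4 := Real.log_exp _
      have hv4 : v ^ 4 = E + t := by
        have h1 : v ^ 4 = Real.exp (D / 4 + (D / 4 + (D / 4 + D / 4))) := by
          rw [Real.exp_add, Real.exp_add, Real.exp_add, ← hv]; ring
        have h2 : D / 4 + (D / 4 + (D / 4 + D / 4)) = D := by ring
        rw [h1, h2, hDdef]
        exact Real.exp_log hEt0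
      have hlogv_le : Real.log v ≤ v - 1 := Real.log_le_sub_one_of_pos (by positivity)
      have hkey1 : v ≤ E + 4 * t / D := by
        have hDv : D = 4 * Real.log v := by rw [hlogv]; ring
        have ht' : t = v ^ 4 - E := by linarith [hv4]
        have h2 : (v - E) * Real.log v ≤ (v - E) * (v - 1) :=
          mul_le_mul_of_nonneg_left hlogv_le (by linarith)
        have h3 : (v - E) * (v - 1) ≤ v ^ 4 - E := by nlinarith [sq_nonneg v, sq_nonneg (v - 1)]
        have h4 : (v - E) * D ≤ 4 * t := by rw [hDv, ht']; nlinarith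
        have h5 : v - E ≤ 4 * t / D := (le_div_iff₀ hD0).2 h4
        linarith
      have hxdivκ : E + 4 * t / D ≤ x / κ := by
        rw [le_div_iff₀ hκ]
        have e1 : (E + 4 * t / D) * κ = E * κ + 4 * L / D := by
          rw [htdef]; field_simp
        rw [e1]; exact hx
      have hvx : v ≤ x / κ := le_trans hkey1 hxdivκ
      have hlogx : D / 4 ≤ Real.log (x / κ) := by
        rw [← hlogv]
        exact Real.log_le_log (by positivity) hvx
      have hxL : 4 * L / D ≤ x := by nlinarith [mul_pos (lt_trans one_pos hE1) hκ]
      have hmul : 4 * L / D * (D / 4) = L := by field_simp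
      calc L = 4 * L / D * (D / 4) := hmul.symm
        _ ≤ x * Real.log (x / κ) := by
            apply mul_le_mul hxL hlogx (by positivity) hx0.le
  have hgoal : Real.log (κ / x) * x ≤ Real.log η := by
    have hlκx : Real.log (κ / x) = -Real.log (x / κ) := by
      rw [← Real.log_inv, inv_div]
    have hlη : Real.log η = -L := by
      rw [hLdef, one_div, Real.log_inv, neg_neg]
    rw [hlκx, hlη]
    linarith
  calc (κ / x) ^ x = Real.exp (Real.log (κ / x) * x) := by
        rw [Real.rpow_def_of_pos (by positivity)]
    _ ≤ Real.exp (Real.log η) := Real.exp_le_exp.2 hgoal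
    _ = η := Real.exp_log hη0
end
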